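/- arXiv:1411.0155 — 2 statements merged into one kernel-verified Lean document; each statement's English description precedes it below -/
import Mathlib

section
/- Suppose F(·,x,a) has bounded variation along x̄ uniformly over A, let δ̄>0 satisfy η^δ̄(T) < ∞, assume (C1) and (C2), and take any δ ∈ (0,δ̄). Then for every s̄ ∈ [S,T), lim_{s↓s̄} sup{ d_H(F(s̄⁺,x,a), F(s,x,a)) : x ∈ x̄(s̄)+δ𝔹, a ∈ A } = 0, and for every t̄ ∈ (S,T], lim_{t↑t̄} sup{ d_H(F(t̄⁻,x,a), F(t,x,a)) : x ∈ x̄(t̄)+δ𝔹, a ∈ A } = 0, where F(s̄⁺,x,a) and F(t̄⁻,x,a) denote the set-valued right and left limits of F(·,x,a) at s̄ and t̄ respectively. -/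
open Set Metric Filter MeasureTheory Pointwise
open scoped ENNReal Topology

noncomputable section

/-- Euclidean `n`-space `ℝⁿ`. -/
abbrev En (n : ℕ) : Type := EuclideanSpace ℝ (Fin n)

/-- A partition `{t₀ = S, t₁, …, t_N = t}` of the interval `[S, t]`. -/
structure IvlPartition (S t : ℝ) where
  N : ℕ
  pts : ℕ → ℝ
  hN : 0 < N
  first : pts 0 = S
  last : pts N = t
  mono : ∀ i, i < N → pts i < pts (i + 1)

/-- `diam(𝒯) ≤ ε` : every subinterval of the partition has length at most `ε`. -/
def IvlPartition.diamLE {S t : ℝ} (P : IvlPartition S t) (ε : ℝ) : Prop :=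
  ∀ i, i < P.N → P.pts (i + 1) - P.pts i ≤ ε

/-- The sum `I^δ(𝒯) = Σᵢ sup { d_H(F(tᵢ₊₁,x,a), F(tᵢ,x,a)) :
x ∈ x̄([tᵢ,tᵢ₊₁]) + δ𝔹, a ∈ A }` for a multifunction `F` along `x̄`, uniformly over `A`. -/
noncomputable def mvSum {n k : ℕ} (F : ℝ → En n → En k → Set (En n))
    (xbar : ℝ → En n) (A : Set (En k)) (δ : ℝ) {S t : ℝ} (P : IvlPartition S t) : ℝ≥0∞ :=
  ∑ i ∈ Finset.range P.N,
    ⨆ x ∈ xbar '' Set.Icc (P.pts i) (P.pts (i + 1)) + Metric.closedBall (0 : En n) δ,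
      ⨆ a ∈ A, EMetric.hausdorffEdist (F (P.pts (i + 1)) x a) (F (P.pts i) x a)

/-- The `(δ,ε)`-perturbed cumulative variation function `η^δ_ε(t)`:
the supremum of `I^δ(𝒯)` over partitions `𝒯` of `[S,t]` with `diam(𝒯) ≤ ε`.
(For `t = S` there are no partitions and the value is `0`.) -/
noncomputable def mvEtaEps {n k : ℕ} (F : ℝ → En n → En k → Set (En n))
    (xbar : ℝ → En n) (A : Set (En k)) (δ ε : ℝ) (S t : ℝ) : ℝ≥0∞ :=
  ⨆ (P : IvlPartition S t) (_ : P.diamLE ε), mvSum F xbar A δ P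

/-- The `δ`-perturbed cumulative variation function `η^δ(t) = lim_{ε↓0} η^δ_ε(t)`
(the limit of the decreasing-in-`ε` family equals the infimum). -/
noncomputable def mvEtaDelta {n k : ℕ} (F : ℝ → En n → En k → Set (En n))
    (xbar : ℝ → En n) (A : Set (En k)) (δ : ℝ) (S t : ℝ) : ℝ≥0∞ :=
  ⨅ (ε : ℝ) (_ : 0 < ε), mvEtaEps F xbar A δ ε S t

/-- The cumulative variation function `η(t) = lim_{δ↓0} η^δ(t)`. -/
noncomputable def mvEta {n k : ℕ} (F : ℝ → En n → En k → Set (En n))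
    (xbar : ℝ → En n) (A : Set (En k)) (S t : ℝ) : ℝ≥0∞ :=
  ⨅ (δ : ℝ) (_ : 0 < δ), mvEtaDelta F xbar A δ S t

/-- `F(·,x,a)` has bounded variation along `x̄` uniformly over `A` : `η(T) < ∞`. -/
def HasBVAlongUniformly {n k : ℕ} (F : ℝ → En n → En k → Set (En n))
    (xbar : ℝ → En n) (A : Set (En k)) (S T : ℝ) : Prop :=
  mvEta F xbar A S T < ⊤

/-- Hypothesis (C1): nonempty closed values, measurability in `t` (Castaing-type
characterization via distance functions), and uniform boundedness near `x̄`. -/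
def HypC1 {n k : ℕ} (F : ℝ → En n → En k → Set (En n))
    (xbar : ℝ → En n) (A : Set (En k)) (S T δbar : ℝ) : Prop :=
  (∀ t ∈ Set.Icc S T, ∀ x : En n, ∀ a ∈ A, (F t x a).Nonempty ∧ IsClosed (F t x a)) ∧
  (∀ x : En n, ∀ a ∈ A, ∀ v : En n,
      Measurable fun t : ℝ => EMetric.infEdist v (F t x a)) ∧
  (∃ c : ℝ, 0 < c ∧ ∀ t ∈ Set.Icc S T, ∀ x ∈ Metric.closedBall (xbar t) δbar, ∀ a ∈ A,
      F t x a ⊆ Metric.closedBall (0 : En n) c)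

/-- Hypothesis (C2): uniform continuity of `(x,a) ↦ F(t,x,a)` near `x̄`,
with a modulus of continuity `γ`. -/
def HypC2 {n k : ℕ} (F : ℝ → En n → En k → Set (En n))
    (xbar : ℝ → En n) (A : Set (En k)) (S T δbar : ℝ) : Prop :=
  ∃ γ : ℝ → ℝ, (∀ s, 0 ≤ γ s) ∧ Tendsto γ (𝓝[>] (0 : ℝ)) (𝓝 0) ∧
    ∀ t ∈ Set.Icc S T, ∀ x ∈ Metric.closedBall (xbar t) δbar,
      ∀ x' ∈ Metric.closedBall (xbar t) δbar, ∀ a ∈ A, ∀ a' ∈ A,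
        F t x a ⊆ F t x' a' + Metric.closedBall (0 : En n) (γ (‖x - x'‖ + ‖a - a'‖))

/-- The Kuratowski upper limit of a family of sets along a filter `l`. -/
def kLimsup {α : Type*} [PseudoEMetricSpace α] (l : Filter ℝ) (G : ℝ → Set α) : Set α :=
  {v | ∀ ε : ℝ≥0∞, 0 < ε → ∃ᶠ s in l, EMetric.infEdist v (G s) < ε}

/-- The Kuratowski lower limit of a family of sets along a filter `l`. -/
def kLiminf {α : Type*} [PseudoEMetricSpace α] (l : Filter ℝ) (G : ℝ → Set α) : Set α :=
  {v | Tendsto (fun s => EMetric.infEdist v (G s)) l (𝓝 0)}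

/-- The set-valued limit along `l` exists: upper and lower Kuratowski limits coincide. -/
def KLimExists {α : Type*} [PseudoEMetricSpace α] (l : Filter ℝ) (G : ℝ → Set α) : Prop :=
  kLimsup l G = kLiminf l G

/-- The set-valued right limit `F(s̄⁺, x, a) = lim_{s ↓ s̄} F(s,x,a)` (with `s ∈ (s̄,T]`). -/
def rightLim {n k : ℕ} (F : ℝ → En n → En k → Set (En n)) (T sbar : ℝ)
    (x : En n) (a : En k) : Set (En n) :=
  kLiminf (𝓝[Set.Ioc sbar T] sbar) fun s => F s x a

/-- The set-valued left limit `F(t̄⁻, x, a) = lim_{t ↑ t̄} F(t,x,a)` (with `t ∈ [S,t̄)`). -/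
def leftLim {n k : ℕ} (F : ℝ → En n → En k → Set (En n)) (S tbar : ℝ)
    (x : En n) (a : En k) : Set (En n) :=
  kLiminf (𝓝[Set.Ico S tbar] tbar) fun s => F s x a

/-!
Fix `ε₀ > 0` with `η^δ̄_{ε₀}(T) < ∞`. As a function of the interval `[a, b]`, the quantity
`η^δ̄_{ε₀}` is superadditive and bounded on `[S, T]`, so it becomes uniformly small on the
subintervals of a short one-sided neighbourhood of `s̄` (or `t̄`). There, by continuity of `x̄`,
every tube `x̄([s, t]) + δ̄𝔹` contains `x̄(s̄) + δ𝔹`, so `s ↦ F(s, x, a)` is Hausdorff-Cauchy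
uniformly in `x ∈ x̄(s̄) + δ𝔹` and `a ∈ A`. The closed subsets of `ℝⁿ` form a complete space for
the Hausdorff distance, and the Hausdorff limit is the Kuratowski lower limit, i.e. the one-sided
limit `F(s̄⁺, x, a)`; the Cauchy bounds pass to the limit uniformly.
-/

section KuratowskiLimit

open TopologicalSpace Metric

variable {α : Type*} [EMetricSpace α] {l : Filter ℝ} {G : ℝ → Set α}

lemma TopologicalSpace.Closeds.edist_closure_closure (s t : Set α) :
    edist (Closeds.closure s) (Closeds.closure t) = hausdorffEDist s t := by
  rw [Closeds.edist_eq, Closeds.coe_closure, Closeds.coe_closure, hausdorffEDist_closure]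

lemma kLiminf_eq_of_tendsto [l.NeBot] {C : Closeds α}
    (hC : Tendsto (fun s => Closeds.closure (G s)) l (𝓝 C)) : kLiminf l G = C := by
  ext v
  have hv : Tendsto (fun s => infEDist v (G s)) l (𝓝 (infEDist v C)) := by
    simpa [Function.comp_def, infEDist_closure] using
      (Closeds.continuous_infEDist.tendsto (v, C)).comp (tendsto_const_nhds.prodMk_nhds hC)
  change Tendsto (fun s => infEDist v (G s)) l (𝓝 0) ↔ v ∈ (C : Set α)
  rw [← C.isClosed.closure_eq, mem_closure_iff_infEDist_zero]
  exact ⟨tendsto_nhds_unique hv, fun h => h ▸ hv⟩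

lemma hausdorffEDist_kLiminf_le [CompleteSpace α] [l.NeBot]
    (hG : ∀ η > 0, ∃ U ∈ l, ∀ s ∈ U, ∀ t ∈ U, hausdorffEDist (G s) (G t) ≤ η)
    {U : Set ℝ} (hU : U ∈ l) {η : ℝ≥0∞}
    (hη : ∀ s ∈ U, ∀ t ∈ U, hausdorffEDist (G s) (G t) ≤ η) {s : ℝ} (hs : s ∈ U) :
    hausdorffEDist (kLiminf l G) (G s) ≤ η := by
  have hcauchy : Cauchy (map (fun s => Closeds.closure (G s)) l) := by
    refine uniformity_basis_edist_le.cauchy_iff.2 ⟨map_neBot, fun ε hε => ?_⟩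
    obtain ⟨V, hV, hVε⟩ := hG ε hε
    refine ⟨_, image_mem_map hV, ?_⟩
    rintro _ ⟨s, hs, rfl⟩ _ ⟨t, ht, rfl⟩
    exact (Closeds.edist_closure_closure _ _).trans_le (hVε s hs t ht)
  obtain ⟨C, hC⟩ := CompleteSpace.complete hcauchy
  rw [kLiminf_eq_of_tendsto hC, ← hausdorffEDist_closure_right, ← Closeds.coe_closure,
    ← Closeds.edist_eq]
  have hlim : Tendsto (fun t => edist (Closeds.closure (G t)) (Closeds.closure (G s))) l
      (𝓝 (edist C (Closeds.closure (G s)))) :=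
    Tendsto.edist hC tendsto_const_nhds
  refine le_of_tendsto hlim (eventually_of_mem hU fun t ht => ?_)
  rw [Closeds.edist_closure_closure]
  exact hη t ht s hs

lemma tendsto_iSup_hausdorffEDist_kLiminf [CompleteSpace α] [l.NeBot] {β γ : Type*}
    {G : β → γ → ℝ → Set α} {B : Set β} {C : Set γ}
    (hG : ∀ η > 0, ∃ U ∈ l, ∀ s ∈ U, ∀ t ∈ U, ∀ b ∈ B, ∀ c ∈ C,
      hausdorffEDist (G b c s) (G b c t) ≤ η) :
    Tendsto (fun s => ⨆ b ∈ B, ⨆ c ∈ C, hausdorffEDist (kLiminf l (G b c)) (G b c s)) l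
      (𝓝 0) := by
  refine ENNReal.tendsto_nhds_zero.2 fun η hη => ?_
  obtain ⟨U, hU, hUη⟩ := hG η hη
  filter_upwards [hU] with s hs
  refine iSup₂_le fun b hb => iSup₂_le fun c hc => ?_
  refine hausdorffEDist_kLiminf_le (fun η' hη' => ?_) hU
    (fun s hs t ht => hUη s hs t ht b hb c hc) hs
  obtain ⟨V, hV, hVη⟩ := hG η' hη'
  exact ⟨V, hV, fun s hs t ht => hVη s hs t ht b hb c hc⟩

end KuratowskiLimit

section Superadditive

variable {μ : ℝ → ℝ → ℝ≥0∞} {M η : ℝ≥0∞}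

lemma exists_forall_lt_of_superadditive_right
    (hμ : ∀ a b c, a < b → b < c → μ a b + μ b c ≤ μ a c) {s₀ r₁ : ℝ} (h : s₀ < r₁)
    (hM : M ≠ ⊤) (hbound : ∀ s ∈ Ioo s₀ r₁, μ s r₁ ≤ M) (hη : 0 < η) :
    ∃ r ∈ Ioo s₀ r₁, ∀ s t, s₀ < s → s < t → t < r → μ s t < η := by
  -- Choose `r` with `μ r r₁` within `η` of `sup_s μ s r₁`: superadditivity leaves less than
  -- `η` for any interval to the left of `r`.
  set m := ⨆ s ∈ Ioo s₀ r₁, μ s r₁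
  have hm : m ≠ ⊤ := ne_top_of_le_ne_top hM (iSup₂_le hbound)
  obtain ⟨r, hr, hmr⟩ : ∃ r ∈ Ioo s₀ r₁, m < μ r r₁ + η := by
    have := ENNReal.lt_add_right hm hη.ne'
    rw [ENNReal.biSup_add (nonempty_Ioo.2 h)] at this
    simpa only [lt_iSup_iff, exists_prop] using this
  refine ⟨r, hr, fun s t hs hst htr => ?_⟩
  have hsum : μ s t + μ r r₁ ≤ m :=
    calc μ s t + μ r r₁ ≤ μ s t + μ t r + μ r r₁ := by gcongr; exact le_self_add
      _ ≤ μ s r + μ r r₁ := by gcongr; exact hμ _ _ _ hst htr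
      _ ≤ μ s r₁ := hμ _ _ _ (hst.trans htr) hr.2
      _ ≤ m := le_iSup₂_of_le s ⟨hs, (hst.trans htr).trans hr.2⟩ le_rfl
  have hfin : μ r r₁ ≠ ⊤ := ne_top_of_le_ne_top hM (hbound r hr)
  exact (ENNReal.add_lt_add_iff_right hfin).1 (hsum.trans_lt (add_comm (μ r r₁) η ▸ hmr))

lemma exists_forall_lt_of_superadditive_left
    (hμ : ∀ a b c, a < b → b < c → μ a b + μ b c ≤ μ a c) {t₀ r₁ : ℝ} (h : r₁ < t₀)
    (hM : M ≠ ⊤) (hbound : ∀ t ∈ Ioo r₁ t₀, μ r₁ t ≤ M) (hη : 0 < η) :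
    ∃ r ∈ Ioo r₁ t₀, ∀ s t, r < s → s < t → t < t₀ → μ s t < η := by
  obtain ⟨r, hr, hsmall⟩ := exists_forall_lt_of_superadditive_right (μ := fun a b => μ (-b) (-a))
    (fun a b c hab hbc => add_comm (μ (-b) (-a)) _ ▸ hμ _ _ _ (neg_lt_neg hbc) (neg_lt_neg hab))
    (neg_lt_neg h) hM (fun s hs => by simpa using hbound (-s) ⟨lt_neg_of_lt_neg hs.2,
      neg_lt.1 hs.1⟩) hη
  refine ⟨-r, ⟨lt_neg_of_lt_neg hr.2, neg_lt.1 hr.1⟩, fun s t hrs hst ht => ?_⟩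
  simpa using hsmall (-t) (-s) (neg_lt_neg ht) (neg_lt_neg hst) (neg_lt.1 hrs)

end Superadditive

namespace IvlPartition

variable {a b c ε : ℝ}

def glue (P : IvlPartition a b) (Q : IvlPartition b c) : IvlPartition a c where
  N := P.N + Q.N
  pts i := if i ≤ P.N then P.pts i else Q.pts (i - P.N)
  hN := Nat.add_pos_left P.hN _
  first := by simp [P.first]
  last := by
    rw [if_neg (by have := Q.hN; omega), Nat.add_sub_cancel_left, Q.last]
  mono i hi := by
    rcases lt_trichotomy i P.N with h | rfl | h
    · rw [if_pos h.le, if_pos (show i + 1 ≤ P.N from h)]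
      exact P.mono i h
    · rw [if_pos le_rfl, if_neg (by omega), Nat.add_sub_cancel_left, P.last]
      calc b = Q.pts 0 := Q.first.symm
        _ < Q.pts (0 + 1) := Q.mono 0 Q.hN
    · rw [if_neg (by omega), if_neg (by omega), Nat.sub_add_comm h.le]
      exact Q.mono (i - P.N) (by omega)

lemma glue_pts_of_le (P : IvlPartition a b) (Q : IvlPartition b c) {i : ℕ} (h : i ≤ P.N) :
    (P.glue Q).pts i = P.pts i :=
  if_pos h

lemma glue_pts_add (P : IvlPartition a b) (Q : IvlPartition b c) (i : ℕ) :
    (P.glue Q).pts (P.N + i) = Q.pts i := by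
  rcases Nat.eq_zero_or_pos i with rfl | h
  · rw [Nat.add_zero, glue_pts_of_le P Q le_rfl, P.last, Q.first]
  · exact (if_neg (by omega)).trans (congrArg Q.pts (Nat.add_sub_cancel_left ..))

lemma diamLE.glue {P : IvlPartition a b} {Q : IvlPartition b c} (hP : P.diamLE ε)
    (hQ : Q.diamLE ε) : (P.glue Q).diamLE ε := by
  intro i hi
  rcases Nat.lt_or_ge i P.N with h | h
  · rw [glue_pts_of_le P Q h, glue_pts_of_le P Q h.le]
    exact hP i h
  · obtain ⟨j, rfl⟩ := Nat.exists_eq_add_of_le h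
    rw [add_assoc, glue_pts_add, glue_pts_add]
    exact hQ j (by change _ < P.N + Q.N at hi; omega)

def uniform (hab : a < b) (hε : 0 < ε) : IvlPartition a b where
  N := ⌈(b - a) / ε⌉₊
  pts i := a + i * ((b - a) / ⌈(b - a) / ε⌉₊)
  hN := Nat.ceil_pos.2 (div_pos (sub_pos.2 hab) hε)
  first := by simp
  last := by
    have : (0 : ℝ) < ⌈(b - a) / ε⌉₊ := by
      exact_mod_cast Nat.ceil_pos.2 (div_pos (sub_pos.2 hab) hε)
    field_simp
    ring
  mono i _ := by
    have : (0 : ℝ) < ⌈(b - a) / ε⌉₊ := by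
      exact_mod_cast Nat.ceil_pos.2 (div_pos (sub_pos.2 hab) hε)
    have : 0 < (b - a) / ⌈(b - a) / ε⌉₊ := div_pos (sub_pos.2 hab) this
    push_cast
    linarith

lemma exists_diamLE (hab : a < b) (hε : 0 < ε) : ∃ P : IvlPartition a b, P.diamLE ε := by
  refine ⟨uniform hab hε, fun i _ => ?_⟩
  have hN : (0 : ℝ) < ⌈(b - a) / ε⌉₊ := by
    exact_mod_cast Nat.ceil_pos.2 (div_pos (sub_pos.2 hab) hε)
  have hstep : (b - a) / ⌈(b - a) / ε⌉₊ ≤ ε := by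
    rw [div_le_iff₀ hN, ← div_le_iff₀' hε]
    exact Nat.le_ceil _
  simp only [uniform]
  push_cast
  linarith

def single (hab : a < b) : IvlPartition a b where
  N := 1
  pts i := if i = 0 then a else b
  hN := one_pos
  first := rfl
  last := rfl
  mono i hi := by
    obtain rfl : i = 0 := by omega
    exact hab

end IvlPartition

section Variation

variable {n k : ℕ} (F : ℝ → En n → En k → Set (En n)) (xbar : ℝ → En n) (A : Set (En k))
  {δ ε a b c S T : ℝ}

lemma mvSum_glue {P : IvlPartition a b} {Q : IvlPartition b c} :
    mvSum F xbar A δ (P.glue Q) = mvSum F xbar A δ P + mvSum F xbar A δ Q := by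
  unfold mvSum
  rw [show (P.glue Q).N = P.N + Q.N from rfl, Finset.sum_range_add]
  congr 1
  · refine Finset.sum_congr rfl fun i hi => ?_
    have hi := Finset.mem_range.1 hi
    rw [IvlPartition.glue_pts_of_le P Q hi, IvlPartition.glue_pts_of_le P Q hi.le]
  · refine Finset.sum_congr rfl fun i _ => ?_
    rw [add_assoc, IvlPartition.glue_pts_add, IvlPartition.glue_pts_add]

lemma mvEtaEps_add_le (hab : a < b) (hbc : b < c) (hε : 0 < ε) :
    mvEtaEps F xbar A δ ε a b + mvEtaEps F xbar A δ ε b c ≤ mvEtaEps F xbar A δ ε a c :=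
  ENNReal.biSup_add_biSup_le' (IvlPartition.exists_diamLE hab hε)
    (IvlPartition.exists_diamLE hbc hε) fun P hP Q hQ =>
      (mvSum_glue F xbar A).symm.trans_le (le_iSup₂_of_le (P.glue Q) (hP.glue hQ) le_rfl)

lemma mvEtaEps_mono (hε : 0 < ε) {a' b' : ℝ} (ha : a' ≤ a) (hab : a < b) (hb : b ≤ b') :
    mvEtaEps F xbar A δ ε a b ≤ mvEtaEps F xbar A δ ε a' b' := by
  have hright : mvEtaEps F xbar A δ ε a b ≤ mvEtaEps F xbar A δ ε a b' := by
    rcases hb.eq_or_lt with rfl | hb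
    · exact le_rfl
    · exact le_self_add.trans (mvEtaEps_add_le F xbar A hab hb hε)
  rcases ha.eq_or_lt with rfl | ha
  · exact hright
  · exact hright.trans (le_add_self.trans (mvEtaEps_add_le F xbar A ha (hab.trans_le hb) hε))

lemma hausdorffEDist_le_mvEtaEps (hab : a < b) (hε : b - a ≤ ε) {x : En n}
    (hx : x ∈ xbar '' Icc a b + closedBall 0 δ) {u : En k} (hu : u ∈ A) :
    Metric.hausdorffEDist (F b x u) (F a x u) ≤ mvEtaEps F xbar A δ ε a b := by
  refine le_iSup₂_of_le (IvlPartition.single hab) (fun i hi => ?_) ?_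
  · obtain rfl : i = 0 := Nat.lt_one_iff.1 hi
    exact hε
  · rw [mvSum, show (IvlPartition.single hab).N = 1 from rfl, Finset.sum_range_one]
    exact le_iSup₂_of_le x hx (le_iSup₂_of_le u hu le_rfl)

lemma exists_pos_mvEtaEps_lt_top (h : mvEtaDelta F xbar A δ S T < ⊤) :
    ∃ ε > 0, mvEtaEps F xbar A δ ε S T < ⊤ := by
  simpa only [mvEtaDelta, iInf_lt_iff, exists_prop] using h

lemma exists_mem_nhdsWithin_Ioc_mvEtaEps_le (hε : 0 < ε)
    (hfin : mvEtaEps F xbar A δ ε S T ≠ ⊤) {s₀ : ℝ} (hs₀ : s₀ ∈ Ico S T) {η : ℝ≥0∞}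
    (hη : 0 < η) :
    ∃ V ∈ 𝓝[Ioc s₀ T] s₀, ∀ s ∈ V, ∀ t ∈ V, s < t → mvEtaEps F xbar A δ ε s t ≤ η := by
  obtain ⟨r, hr, hsmall⟩ := exists_forall_lt_of_superadditive_right
    (μ := fun a b => mvEtaEps F xbar A δ ε a b)
    (fun a b c hab hbc => mvEtaEps_add_le F xbar A hab hbc hε) hs₀.2 hfin
    (fun s hs => mvEtaEps_mono F xbar A hε (hs₀.1.trans hs.1.le) hs.2 le_rfl) hη
  exact ⟨Ioo s₀ r, nhdsWithin_mono _ Ioc_subset_Ioi_self (Ioo_mem_nhdsGT hr.1),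
    fun s hs t ht hst => (hsmall s t hs.1 hst ht.2).le⟩

lemma exists_mem_nhdsWithin_Ico_mvEtaEps_le (hε : 0 < ε)
    (hfin : mvEtaEps F xbar A δ ε S T ≠ ⊤) {t₀ : ℝ} (ht₀ : t₀ ∈ Ioc S T) {η : ℝ≥0∞}
    (hη : 0 < η) :
    ∃ V ∈ 𝓝[Ico S t₀] t₀, ∀ s ∈ V, ∀ t ∈ V, s < t → mvEtaEps F xbar A δ ε s t ≤ η := by
  obtain ⟨r, hr, hsmall⟩ := exists_forall_lt_of_superadditive_left
    (μ := fun a b => mvEtaEps F xbar A δ ε a b)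
    (fun a b c hab hbc => mvEtaEps_add_le F xbar A hab hbc hε) ht₀.1 hfin
    (fun t ht => mvEtaEps_mono F xbar A hε le_rfl ht.1 (ht.2.le.trans ht₀.2)) hη
  exact ⟨Ioo r t₀, nhdsWithin_mono _ Ico_subset_Iio_self (Ioo_mem_nhdsLT hr.2),
    fun s hs t ht hst => (hsmall s t hs.1 hst ht.2).le⟩

lemma uniformCauchy_hausdorffEDist_of_mvEtaEps_le (hx : ContinuousOn xbar (Icc S T)) {c : ℝ}
    (hc : c ∈ Icc S T) {l : Filter ℝ} (hl : l ≤ 𝓝[Icc S T] c) {δbar : ℝ} (hδ : δ < δbar)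
    (hε : 0 < ε)
    (hμ : ∀ η > 0, ∃ V ∈ l, ∀ s ∈ V, ∀ t ∈ V, s < t → mvEtaEps F xbar A δbar ε s t ≤ η) :
    ∀ η > 0, ∃ U ∈ l, ∀ s ∈ U, ∀ t ∈ U, ∀ x ∈ closedBall (xbar c) δ, ∀ u ∈ A,
      Metric.hausdorffEDist (F s x u) (F t x u) ≤ η := by
  intro η hη
  obtain ⟨V, hV, hVη⟩ := hμ η hη
  have hnear : ∀ᶠ s in l, dist (xbar s) (xbar c) ≤ δbar - δ :=
    ((hx c hc).mono_left hl).eventually (closedBall_mem_nhds _ (sub_pos.2 hδ))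
  have hshort : Ioo (c - ε / 2) (c + ε / 2) ∈ l :=
    hl.trans nhdsWithin_le_nhds (Ioo_mem_nhds (by linarith) (by linarith))
  set U := V ∩ {s | dist (xbar s) (xbar c) ≤ δbar - δ} ∩ Ioo (c - ε / 2) (c + ε / 2)
  have hlt : ∀ s ∈ U, ∀ t ∈ U, s < t → ∀ x ∈ closedBall (xbar c) δ, ∀ u ∈ A,
      Metric.hausdorffEDist (F t x u) (F s x u) ≤ η := by
    rintro s ⟨⟨hsV, hsc⟩, hs⟩ t ⟨⟨htV, -⟩, ht⟩ hst x hx u hu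
    have hxs : x ∈ xbar '' Icc s t + closedBall 0 δbar := by
      have hdist : dist x (xbar s) ≤ δbar :=
        calc dist x (xbar s) ≤ dist x (xbar c) + dist (xbar s) (xbar c) :=
              dist_triangle_right _ _ _
          _ ≤ δ + (δbar - δ) := add_le_add (mem_closedBall.1 hx) hsc
          _ = δbar := add_sub_cancel _ _
      refine ⟨xbar s, mem_image_of_mem _ ⟨le_rfl, hst.le⟩, x - xbar s, ?_, add_sub_cancel _ _⟩
      rwa [mem_closedBall_zero_iff, ← dist_eq_norm]
    exact (hausdorffEDist_le_mvEtaEps F xbar A hst (by linarith [hs.1, ht.2]) hxs hu).trans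
      (hVη s hsV t htV hst)
  refine ⟨U, inter_mem (inter_mem hV hnear) hshort, fun s hs t ht x hx u hu => ?_⟩
  rcases lt_trichotomy s t with hst | rfl | hts
  · rw [Metric.hausdorffEDist_comm]
    exact hlt s hs t ht hst x hx u hu
  · simp
  · exact hlt t ht s hs hts x hx u hu

end Variation

theorem statement2_general {n k : ℕ} (F : ℝ → En n → En k → Set (En n))
    (xbar : ℝ → En n) (A : Set (En k)) (S T : ℝ)
    (hx : ContinuousOn xbar (Set.Icc S T))
    (δbar : ℝ) (hfin : mvEtaDelta F xbar A δbar S T < ⊤)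
    (δ : ℝ) (hδ : δ ∈ Set.Ioo 0 δbar) :
    (∀ sbar ∈ Set.Ico S T,
      Tendsto
        (fun s => ⨆ x ∈ Metric.closedBall (xbar sbar) δ, ⨆ a ∈ A,
          EMetric.hausdorffEdist (rightLim F T sbar x a) (F s x a))
        (𝓝[Set.Ioc sbar T] sbar) (𝓝 0)) ∧
    (∀ tbar ∈ Set.Ioc S T,
      Tendsto
        (fun t => ⨆ x ∈ Metric.closedBall (xbar tbar) δ, ⨆ a ∈ A,
          EMetric.hausdorffEdist (leftLim F S tbar x a) (F t x a))
        (𝓝[Set.Ico S tbar] tbar) (𝓝 0)) := by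
  obtain ⟨ε, hε, hfinε⟩ := exists_pos_mvEtaEps_lt_top F xbar A hfin
  refine ⟨fun sbar hsbar => ?_, fun tbar htbar => ?_⟩
  · have : (𝓝[Ioc sbar T] sbar).NeBot := left_nhdsWithin_Ioc_neBot hsbar.2
    have hl : 𝓝[Ioc sbar T] sbar ≤ 𝓝[Icc S T] sbar :=
      nhdsWithin_mono _ (Ioc_subset_Icc_self.trans (Icc_subset_Icc_left hsbar.1))
    exact tendsto_iSup_hausdorffEDist_kLiminf (G := fun x a s => F s x a)
      (uniformCauchy_hausdorffEDist_of_mvEtaEps_le F xbar A hx (Ico_subset_Icc_self hsbar) hl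
        hδ.2 hε fun η hη => exists_mem_nhdsWithin_Ioc_mvEtaEps_le F xbar A hε hfinε.ne hsbar hη)
  · have : (𝓝[Ico S tbar] tbar).NeBot := right_nhdsWithin_Ico_neBot htbar.1
    have hl : 𝓝[Ico S tbar] tbar ≤ 𝓝[Icc S T] tbar :=
      nhdsWithin_mono _ (Ico_subset_Icc_self.trans (Icc_subset_Icc_right htbar.2))
    exact tendsto_iSup_hausdorffEDist_kLiminf (G := fun x a s => F s x a)
      (uniformCauchy_hausdorffEDist_of_mvEtaEps_le F xbar A hx (Ioc_subset_Icc_self htbar) hl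
        hδ.2 hε fun η hη => exists_mem_nhdsWithin_Ico_mvEtaEps_le F xbar A hε hfinε.ne htbar hη)

/-- Under bounded variation along `x̄` uniformly over `A`,
`η^δ̄(T) < ∞`, (C1) and (C2), for every `δ ∈ (0,δ̄)`:
for every `s̄ ∈ [S,T)`, `sup{ d_H(F(s̄⁺,x,a), F(s,x,a)) : x ∈ x̄(s̄)+δ𝔹, a ∈ A } → 0`
as `s ↓ s̄`, and for every `t̄ ∈ (S,T]`,
`sup{ d_H(F(t̄⁻,x,a), F(t,x,a)) : x ∈ x̄(t̄)+δ𝔹, a ∈ A } → 0` as `t ↑ t̄`. -/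
theorem statement2 {n k : ℕ} (F : ℝ → En n → En k → Set (En n))
    (xbar : ℝ → En n) (A : Set (En k)) (S T : ℝ) (hST : S < T)
    (hA : IsCompact A) (hx : ContinuousOn xbar (Set.Icc S T))
    (hBV : HasBVAlongUniformly F xbar A S T)
    (δbar : ℝ) (hδbar : 0 < δbar) (hfin : mvEtaDelta F xbar A δbar S T < ⊤)
    (hC1 : HypC1 F xbar A S T δbar) (hC2 : HypC2 F xbar A S T δbar)
    (δ : ℝ) (hδ : δ ∈ Set.Ioo 0 δbar) :
    (∀ sbar ∈ Set.Ico S T,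
      Tendsto
        (fun s => ⨆ x ∈ Metric.closedBall (xbar sbar) δ, ⨆ a ∈ A,
          EMetric.hausdorffEdist (rightLim F T sbar x a) (F s x a))
        (𝓝[Set.Ioc sbar T] sbar) (𝓝 0)) ∧
    (∀ tbar ∈ Set.Ioc S T,
      Tendsto
        (fun t => ⨆ x ∈ Metric.closedBall (xbar tbar) δ, ⨆ a ∈ A,
          EMetric.hausdorffEdist (leftLim F S tbar x a) (F t x a))
        (𝓝[Set.Ico S tbar] tbar) (𝓝 0)) :=
  statement2_general F xbar A S T hx δbar hfin δ hδ
end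
end

section
/- Let m : [S,T] × ℝⁿ → ℝ^r and x̄ : [S,T] → ℝⁿ satisfy hypotheses (BV1) and (BV2). Then the weak* limit measure μ of the discrete measures μ^j := Σ_{i=0}^{N_j−1} [m(t^j_{i+1}, ξ^j_i) − m(t^j_i, ξ^j_i)] δ_{t^j_i} does not depend on the choice of the sequence of partitions {t^j_i} (with diam({t^j_i}) → 0), of the sequence ρ^j ↓ 0, or of the collections of vectors {ξ^j_i} satisfying ξ^j_i ∈ x̄(t) + ρ^j 𝔹 for some t ∈ [t^j_i, t^j_{i+1}]: any two admissible choices yield sequences of discrete measures with the same weak* limit in C([S,T];ℝ^r)*. -/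
open Set Metric Filter MeasureTheory Pointwise
open scoped ENNReal Topology

noncomputable section

/-- A partition `{t₀ = S, t₁, …, t_N = t}` of the interval `[S, t]`. -/
structure IntervalPartition (S t : ℝ) where
  N : ℕ
  pts : ℕ → ℝ
  hN : 0 < N
  first : pts 0 = S
  last : pts N = t
  mono : ∀ i, i < N → pts i < pts (i + 1)

/-- `diam(𝒯) ≤ ε` : every subinterval of the partition has length at most `ε`. -/
def IntervalPartition.diamLE {S t : ℝ} (P : IntervalPartition S t) (ε : ℝ) : Prop :=
  ∀ i, i < P.N → P.pts (i + 1) - P.pts i ≤ ε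

/-- The sum `I^δ(𝒯) = Σᵢ sup { |m(tᵢ₊₁,x) − m(tᵢ,x)| : x ∈ x̄([tᵢ,tᵢ₊₁]) + δ𝔹 }`
for a function `m` along `x̄` (distances measured by `edist` in the target). -/
noncomputable def fSum {E α : Type*} [NormedAddCommGroup E] [PseudoEMetricSpace α]
    (m : ℝ → E → α) (xbar : ℝ → E) (δ : ℝ) {S t : ℝ} (P : IntervalPartition S t) : ℝ≥0∞ :=
  ∑ i ∈ Finset.range P.N,
    ⨆ x ∈ xbar '' Set.Icc (P.pts i) (P.pts (i + 1)) + Metric.closedBall (0 : E) δ,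
      edist (m (P.pts (i + 1)) x) (m (P.pts i) x)

/-- The `(δ,ε)`-perturbed cumulative variation function `η^δ_ε(t)` of `m(·,x)` along
`x̄`: the supremum of `I^δ(𝒯)` over partitions `𝒯` of `[S,t]` with `diam(𝒯) ≤ ε`. -/
noncomputable def fEtaEps {E α : Type*} [NormedAddCommGroup E] [PseudoEMetricSpace α]
    (m : ℝ → E → α) (xbar : ℝ → E) (δ ε : ℝ) (S t : ℝ) : ℝ≥0∞ :=
  ⨆ (P : IntervalPartition S t) (_ : P.diamLE ε), fSum m xbar δ P

/-- The `δ`-perturbed cumulative variation function `η^δ(t) = lim_{ε↓0} η^δ_ε(t)`. -/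
noncomputable def fEtaDelta {E α : Type*} [NormedAddCommGroup E] [PseudoEMetricSpace α]
    (m : ℝ → E → α) (xbar : ℝ → E) (δ : ℝ) (S t : ℝ) : ℝ≥0∞ :=
  ⨅ (ε : ℝ) (_ : 0 < ε), fEtaEps m xbar δ ε S t

/-- The cumulative variation function `η(t) = lim_{δ↓0} η^δ(t)` of `m(·,x)` along `x̄`. -/
noncomputable def fEta {E α : Type*} [NormedAddCommGroup E] [PseudoEMetricSpace α]
    (m : ℝ → E → α) (xbar : ℝ → E) (S t : ℝ) : ℝ≥0∞ :=
  ⨅ (δ : ℝ) (_ : 0 < δ), fEtaDelta m xbar δ S t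

/-- `m(·,x)` has bounded variation along `x̄` on `[S,T]` : `η(T) < ∞`. -/
def FunHasBVAlong {E α : Type*} [NormedAddCommGroup E] [PseudoEMetricSpace α]
    (m : ℝ → E → α) (xbar : ℝ → E) (S T : ℝ) : Prop :=
  fEta m xbar S T < ⊤

/-- Hypothesis (BV1): `x̄` is continuous and, for some `δ' > 0`, `m(t,·)` is
continuously differentiable on the interior of `x̄(t) + δ'𝔹` for all `t ∈ [S,T]`. -/
def HypBV1 {n r : ℕ} (m : ℝ → En n → En r) (xbar : ℝ → En n) (S T δ' : ℝ) : Prop :=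
  ContinuousOn xbar (Set.Icc S T) ∧ 0 < δ' ∧
    ∀ t ∈ Set.Icc S T, ContDiffOn ℝ 1 (m t) (Metric.ball (xbar t) δ')

/-- Hypothesis (BV2): both `m(·,x)` and `∇ₓm(·,x)` have bounded variation along `x̄`. -/
def HypBV2 {n r : ℕ} (m : ℝ → En n → En r) (xbar : ℝ → En n) (S T : ℝ) : Prop :=
  FunHasBVAlong m xbar S T ∧
    FunHasBVAlong (fun t x => fderiv ℝ (m t) x) xbar S T

/-- The pairing `∫ g·dμʲ = Σᵢ ⟨g(tᵢ), m(tᵢ₊₁,ξᵢ) − m(tᵢ,ξᵢ)⟩` of a continuous function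
`g` with the discrete `ℝʳ`-valued measure `μʲ = Σᵢ [m(tᵢ₊₁,ξᵢ) − m(tᵢ,ξᵢ)] δ_{tᵢ}`. -/
noncomputable def discretePairing {n r : ℕ} (m : ℝ → En n → En r) {S T : ℝ}
    (P : IntervalPartition S T) (ξ : ℕ → En n) (g : ℝ → En r) : ℝ :=
  ∑ i ∈ Finset.range P.N, ∑ l : Fin r,
    g (P.pts i) l * (m (P.pts (i + 1)) (ξ i) l - m (P.pts i) (ξ i) l)

/-- The integral `∫ f dμ` of a real function against a signed Borel measure,
via the Jordan decomposition. -/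
noncomputable def signedIntegral (μ : MeasureTheory.SignedMeasure ℝ) (f : ℝ → ℝ) : ℝ :=
  (∫ t, f t ∂μ.toJordanDecomposition.posPart) -
    ∫ t, f t ∂μ.toJordanDecomposition.negPart

/-- The pairing `∫ g·dμ = Σ_l ∫ g_l dμ_l` of a continuous function with an
`ℝʳ`-valued Borel measure `μ` (given through its `r` signed components). -/
noncomputable def signedPairing {r : ℕ} (μ : Fin r → MeasureTheory.SignedMeasure ℝ)
    (g : ℝ → En r) : ℝ :=
  ∑ l : Fin r, signedIntegral (μ l) fun t => g t l

/-- `μ` (an `ℝʳ`-valued Borel measure on `[S,T]`, given through its signed components)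
is the partial variation measure `B ↦ ∫_B d_t m(t,x̄(t))` of `m(·,x)` along `x̄`:
it is supported on `[S,T]` and is the weak* limit of the discrete measures
`μʲ = Σᵢ [m(tʲᵢ₊₁,ξʲᵢ) − m(tʲᵢ,ξʲᵢ)] δ_{tʲᵢ}`, for every sequence of partitions of
`[S,T]` with diameters tending to `0` and points `ξʲᵢ = x̄(t)`, `t ∈ [tʲᵢ,tʲᵢ₊₁]`. -/
def IsPartialVariationMeasure {n r : ℕ} (m : ℝ → En n → En r) (xbar : ℝ → En n)
    (S T : ℝ) (μ : Fin r → MeasureTheory.SignedMeasure ℝ) : Prop :=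
  (∀ l, (μ l).restrict (Set.Icc S T)ᶜ = 0) ∧
  ∀ (P : ℕ → IntervalPartition S T) (ξ : ℕ → ℕ → En n),
    (∀ ε : ℝ, 0 < ε → ∃ J : ℕ, ∀ j ≥ J, (P j).diamLE ε) →
    (∀ j i, i < (P j).N →
      ∃ t ∈ Set.Icc ((P j).pts i) ((P j).pts (i + 1)), ξ j i = xbar t) →
    ∀ g : ℝ → En r, Continuous g →
      Tendsto (fun j => discretePairing m (P j) (ξ j) g) atTop (𝓝 (signedPairing μ g))

/-!
Two tagged partitions that are fine enough have a common refinement `R`, and each of the two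
pairings is compared with the pairing along `R` tagged by the points `x̄(s)` at the left endpoints
`s` of its cells. On a cell `[s, s']` of `R` inside the cell `[tᵢ, tᵢ₊₁]` of `P`, moving the
evaluation point of `g` from `tᵢ` to `s` costs at most the oscillation of `g` times
`|m(s',ξᵢ) − m(s,ξᵢ)|`, and moving the tag from `ξᵢ` to `x̄(s)` costs, by the mean value
inequality, at most `‖g‖ · |ξᵢ − x̄(s)| · sup ‖∇ₓm(s',·) − ∇ₓm(s,·)‖` over a tube around `x̄`.
Summed over the cells of `R`, these are the sums `I^δ` for `m` and `∇ₓm`, bounded by (BV2), times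
the oscillations of `g` and `x̄` and the radius `ρ`, all of which vanish in the limit.
-/

namespace IntervalPartition

variable {S T : ℝ}

theorem strictMonoOn_pts (P : IntervalPartition S T) : StrictMonoOn P.pts (Iic P.N) :=
  strictMonoOn_Iic_of_lt_succ P.mono

theorem pts_mem_Icc (P : IntervalPartition S T) {i : ℕ} (hi : i ≤ P.N) :
    P.pts i ∈ Icc S T := by
  have hmono := P.strictMonoOn_pts.monotoneOn
  constructor
  · simpa only [P.first] using hmono (Nat.zero_le _) hi (Nat.zero_le i)
  · simpa only [P.last] using hmono hi (le_refl P.N) hi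

theorem left_lt_right (P : IntervalPartition S T) : S < T := by
  simpa only [P.first, P.last] using
    P.strictMonoOn_pts (Nat.zero_le _) (le_refl P.N) P.hN

theorem Icc_pts_subset (P : IntervalPartition S T) {i : ℕ} (hi : i < P.N) :
    Icc (P.pts i) (P.pts (i + 1)) ⊆ Icc S T :=
  Icc_subset_Icc (P.pts_mem_Icc hi.le).1 (P.pts_mem_Icc hi).2

theorem diamLE.mono {P : IntervalPartition S T} {ε ε' : ℝ} (hP : P.diamLE ε) (h : ε ≤ ε') :
    P.diamLE ε' :=
  fun i hi => (hP i hi).trans h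

theorem diamLE.dist_le {P : IntervalPartition S T} {ε : ℝ} (hP : P.diamLE ε) {i : ℕ}
    (hi : i < P.N) {s t : ℝ} (hs : s ∈ Icc (P.pts i) (P.pts (i + 1)))
    (ht : t ∈ Icc (P.pts i) (P.pts (i + 1))) : dist s t ≤ ε :=
  (Real.dist_le_of_mem_Icc hs ht).trans (hP i hi)

def ofFinset (F : Finset ℝ) (hST : S < T) (hS : S ∈ F) (hT : T ∈ F)
    (hF : ∀ x ∈ F, x ∈ Icc S T) : IntervalPartition S T where
  N := F.card - 1
  pts k := if h : k < F.card then F.orderEmbOfFin rfl ⟨k, h⟩ else T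
  hN := by
    have : 2 ≤ F.card := by
      simpa [hST.ne] using
        Finset.card_le_card (Finset.insert_subset hS (Finset.singleton_subset_iff.2 hT))
    omega
  first := by
    have hpos : 0 < F.card := Finset.card_pos.2 ⟨S, hS⟩
    rw [dif_pos hpos, Finset.orderEmbOfFin_zero rfl hpos]
    exact le_antisymm (F.min'_le S hS) (F.le_min' _ _ fun y hy => (hF y hy).1)
  last := by
    have hpos : 0 < F.card := Finset.card_pos.2 ⟨S, hS⟩
    rw [dif_pos (Nat.sub_lt hpos one_pos), Finset.orderEmbOfFin_last rfl hpos]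
    exact le_antisymm (F.max'_le _ _ fun y hy => (hF y hy).2) (F.le_max' T hT)
  mono i hi := by
    rw [dif_pos (by omega), dif_pos (by omega)]
    exact (F.orderEmbOfFin rfl).strictMono (Fin.mk_lt_mk.2 (Nat.lt_succ_self i))

theorem exists_ofFinset_pts_eq {F : Finset ℝ} (hST : S < T) (hS : S ∈ F) (hT : T ∈ F)
    (hF : ∀ x ∈ F, x ∈ Icc S T) {x : ℝ} (hx : x ∈ F) :
    ∃ k ≤ (ofFinset F hST hS hT hF).N, (ofFinset F hST hS hT hF).pts k = x := by
  obtain ⟨⟨k, hk⟩, rfl⟩ : x ∈ Set.range (F.orderEmbOfFin rfl) := by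
    rwa [Finset.range_orderEmbOfFin]
  exact ⟨k, Nat.le_sub_one_of_lt hk, dif_pos hk⟩

structure IsRefinement (R P : IntervalPartition S T) (κ : ℕ → ℕ) : Prop where
  strictMonoOn : StrictMonoOn κ (Iic P.N)
  map_zero : κ 0 = 0
  map_N : κ P.N = R.N
  pts_comp : ∀ i ≤ P.N, R.pts (κ i) = P.pts i

theorem exists_isRefinement {R P : IntervalPartition S T}
    (h : ∀ i ≤ P.N, ∃ k ≤ R.N, R.pts k = P.pts i) : ∃ κ, IsRefinement R P κ := by
  choose! κ hκN hκ using h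
  refine ⟨κ, fun i hi j hj hij => ?_, ?_, ?_, hκ⟩
  · rw [← R.strictMonoOn_pts.lt_iff_lt (hκN i hi) (hκN j hj), hκ i hi, hκ j hj]
    exact P.strictMonoOn_pts hi hj hij
  · apply R.strictMonoOn_pts.injOn (hκN 0 (Nat.zero_le _)) (Nat.zero_le R.N)
    rw [hκ 0 (Nat.zero_le _), P.first, R.first]
  · apply R.strictMonoOn_pts.injOn (hκN _ le_rfl) (le_refl R.N)
    rw [hκ _ le_rfl, P.last, R.last]

theorem exists_common_refinement (P P' : IntervalPartition S T) :
    ∃ (R : IntervalPartition S T) (κ κ' : ℕ → ℕ), IsRefinement R P κ ∧ IsRefinement R P' κ' := by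
  classical
  let F := (Finset.range (P.N + 1)).image P.pts ∪ (Finset.range (P'.N + 1)).image P'.pts
  have hP : ∀ i ≤ P.N, P.pts i ∈ F := fun i hi =>
    Finset.mem_union_left _ (Finset.mem_image_of_mem _ (Finset.mem_range.2 (Nat.lt_succ_of_le hi)))
  have hP' : ∀ i ≤ P'.N, P'.pts i ∈ F := fun i hi =>
    Finset.mem_union_right _ (Finset.mem_image_of_mem _ (Finset.mem_range.2 (Nat.lt_succ_of_le hi)))
  have hF : ∀ x ∈ F, x ∈ Icc S T := by
    simp only [F, Finset.mem_union, Finset.mem_image, Finset.mem_range]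
    rintro x (⟨i, hi, rfl⟩ | ⟨i, hi, rfl⟩)
    exacts [P.pts_mem_Icc (Nat.le_of_lt_succ hi), P'.pts_mem_Icc (Nat.le_of_lt_succ hi)]
  have hS : S ∈ F := P.first ▸ hP 0 (Nat.zero_le _)
  have hT : T ∈ F := P.last ▸ hP _ le_rfl
  have hR := fun x (hx : x ∈ F) => exists_ofFinset_pts_eq P.left_lt_right hS hT hF hx
  obtain ⟨κ, hκ⟩ := exists_isRefinement fun i hi => hR _ (hP i hi)
  obtain ⟨κ', hκ'⟩ := exists_isRefinement fun i hi => hR _ (hP' i hi)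
  exact ⟨_, κ, κ', hκ, hκ'⟩

end IntervalPartition

theorem Finset.sum_range_sum_Ico_of_monotoneOn {M : Type*} [AddCommMonoid M] {κ : ℕ → ℕ}
    {N : ℕ} (hκ : MonotoneOn κ (Set.Iic N)) (f : ℕ → M) :
    ∑ i ∈ Finset.range N, ∑ k ∈ Finset.Ico (κ i) (κ (i + 1)), f k =
      ∑ k ∈ Finset.Ico (κ 0) (κ N), f k := by
  induction N with
  | zero => simp
  | succ N ih =>
    have hκN : MonotoneOn κ (Set.Iic N) := hκ.mono (Set.Iic_subset_Iic.2 N.le_succ)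
    rw [Finset.sum_range_succ, ih hκN, Finset.sum_Ico_consecutive _
      (hκN (Nat.zero_le _) (le_refl N) (Nat.zero_le N)) (hκ N.le_succ (le_refl (N + 1)) N.le_succ)]

namespace IntervalPartition.IsRefinement

variable {S T : ℝ} {R P : IntervalPartition S T} {κ : ℕ → ℕ}

theorem sum_Ico_blocks (h : IsRefinement R P κ) {M : Type*} [AddCommMonoid M] (f : ℕ → M) :
    ∑ i ∈ Finset.range P.N, ∑ k ∈ Finset.Ico (κ i) (κ (i + 1)), f k =
      ∑ k ∈ Finset.range R.N, f k := by
  rw [Finset.sum_range_sum_Ico_of_monotoneOn h.strictMonoOn.monotoneOn, h.map_zero, h.map_N,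
    Finset.range_eq_Ico]

theorem exists_mem_Ico (h : IsRefinement R P κ) {k : ℕ} (hk : k < R.N) :
    ∃ i < P.N, k ∈ Finset.Ico (κ i) (κ (i + 1)) := by
  have : k ∈ Ico (κ 0) (κ P.N) := by rw [h.map_zero, h.map_N]; exact ⟨Nat.zero_le _, hk⟩
  obtain ⟨i, hκi, hi, hκi'⟩ := by simpa using Ico_subset_biUnion_Ico P.N κ this
  exact ⟨i, hi, Finset.mem_Ico.2 ⟨hκi, hκi'⟩⟩

theorem lt_N_of_mem_Ico (h : IsRefinement R P κ) {i k : ℕ} (hi : i < P.N)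
    (hk : k ∈ Finset.Ico (κ i) (κ (i + 1))) : k < R.N :=
  (Finset.mem_Ico.1 hk).2.trans_le (h.map_N ▸ h.strictMonoOn.monotoneOn hi (le_refl P.N) hi)

theorem Icc_subset (h : IsRefinement R P κ) {i k : ℕ} (hi : i < P.N)
    (hk : k ∈ Finset.Ico (κ i) (κ (i + 1))) :
    Icc (R.pts k) (R.pts (k + 1)) ⊆ Icc (P.pts i) (P.pts (i + 1)) := by
  rw [Finset.mem_Ico] at hk
  have hκN : κ (i + 1) ≤ R.N := h.map_N ▸ h.strictMonoOn.monotoneOn hi (le_refl P.N) hi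
  rw [← h.pts_comp i hi.le, ← h.pts_comp (i + 1) hi]
  exact Icc_subset_Icc
    (R.strictMonoOn_pts.monotoneOn (show κ i ≤ R.N by omega) (show k ≤ R.N by omega) hk.1)
    (R.strictMonoOn_pts.monotoneOn (show k + 1 ≤ R.N by omega) hκN hk.2)

theorem diamLE (h : IsRefinement R P κ) {ε : ℝ} (hP : P.diamLE ε) : R.diamLE ε := by
  intro k hk
  obtain ⟨i, hi, hki⟩ := h.exists_mem_Ico hk
  obtain ⟨hleft, hright⟩ :=
    (Icc_subset_Icc_iff (R.mono k hk).le).1 (h.Icc_subset hi hki)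
  linarith [hP i hi]

end IntervalPartition.IsRefinement

section Variation

variable {E α : Type*} [NormedAddCommGroup E] [PseudoEMetricSpace α] {m : ℝ → E → α}
  {xbar : ℝ → E} {S T δ ε : ℝ}

def cellSup (m : ℝ → E → α) (xbar : ℝ → E) (δ a b : ℝ) : ℝ≥0∞ :=
  ⨆ x ∈ xbar '' Icc a b + closedBall (0 : E) δ, edist (m b x) (m a x)

theorem fSum_eq_sum_cellSup (P : IntervalPartition S T) :
    fSum m xbar δ P = ∑ i ∈ Finset.range P.N, cellSup m xbar δ (P.pts i) (P.pts (i + 1)) :=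
  rfl

theorem edist_le_cellSup {a b s : ℝ} {x : E} (hs : s ∈ Icc a b) (hx : dist x (xbar s) ≤ δ) :
    edist (m b x) (m a x) ≤ cellSup m xbar δ a b := by
  have hmem : x ∈ xbar '' Icc a b + closedBall (0 : E) δ :=
    ⟨xbar s, mem_image_of_mem _ hs, x - xbar s,
      by rwa [mem_closedBall_zero_iff, ← dist_eq_norm], add_sub_cancel _ _⟩
  exact le_iSup₂ (f := fun y (_ : y ∈ xbar '' Icc a b + closedBall (0 : E) δ) =>
    edist (m b y) (m a y)) x hmem

theorem cellSup_ne_top {P : IntervalPartition S T} (h : fSum m xbar δ P ≠ ⊤) {k : ℕ}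
    (hk : k < P.N) : cellSup m xbar δ (P.pts k) (P.pts (k + 1)) ≠ ⊤ :=
  ne_top_of_le_ne_top h <|
    Finset.single_le_sum (f := fun k => cellSup m xbar δ (P.pts k) (P.pts (k + 1)))
      (fun _ _ => zero_le) (Finset.mem_range.2 hk)

theorem sum_toReal_cellSup {P : IntervalPartition S T} (h : fSum m xbar δ P ≠ ⊤) :
    ∑ k ∈ Finset.range P.N, (cellSup m xbar δ (P.pts k) (P.pts (k + 1))).toReal =
      (fSum m xbar δ P).toReal := by
  rw [fSum_eq_sum_cellSup, ENNReal.toReal_sum fun k hk =>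
    cellSup_ne_top h (Finset.mem_range.1 hk)]

theorem fSum_le_fEtaEps {δ₀ : ℝ} (hδ : δ ≤ δ₀) {P : IntervalPartition S T}
    (hP : P.diamLE ε) : fSum m xbar δ P ≤ fEtaEps m xbar δ₀ ε S T := by
  refine le_trans (Finset.sum_le_sum fun i _ => ?_)
    (le_iSup₂ (f := fun (P : IntervalPartition S T) (_ : P.diamLE ε) => fSum m xbar δ₀ P) P hP)
  exact biSup_mono fun x => (add_subset_add_left (closedBall_subset_closedBall hδ) ·)

theorem FunHasBVAlong.exists_fEtaEps_lt_top (h : FunHasBVAlong m xbar S T) :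
    ∃ δ > 0, ∃ ε > 0, fEtaEps m xbar δ ε S T < ⊤ := by
  simpa only [FunHasBVAlong, fEta, fEtaDelta, iInf_lt_iff, exists_prop] using h

end Variation

open scoped RealInnerProductSpace

theorem discretePairing_eq_sum_inner {n r : ℕ} {S T : ℝ} (m : ℝ → En n → En r)
    (P : IntervalPartition S T) (ξ : ℕ → En n) (g : ℝ → En r) :
    discretePairing m P ξ g = ∑ i ∈ Finset.range P.N,
      ⟪g (P.pts i), m (P.pts (i + 1)) (ξ i) - m (P.pts i) (ξ i)⟫ := by
  simp [discretePairing, PiLp.inner_apply, mul_comm]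

theorem abs_inner_sub_inner_increment_le {E F : Type*} [NormedAddCommGroup E]
    [NormedSpace ℝ E] [NormedAddCommGroup F] [InnerProductSpace ℝ F] {f₀ f₁ : E → F}
    {x y : E} {ρ M D : ℝ}
    (hdiff : ∀ z ∈ closedBall y ρ, DifferentiableAt ℝ f₀ z ∧ DifferentiableAt ℝ f₁ z)
    (hD : ∀ z ∈ closedBall y ρ, ‖fderiv ℝ f₁ z - fderiv ℝ f₀ z‖ ≤ D)
    (hM : ‖f₁ x - f₀ x‖ ≤ M) (hx : dist x y ≤ ρ) (a b : F) :
    |⟪a, f₁ x - f₀ x⟫ - ⟪b, f₁ y - f₀ y⟫| ≤ dist a b * M + ‖b‖ * (D * ρ) := by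
  have hmvt : ‖(f₁ x - f₀ x) - (f₁ y - f₀ y)‖ ≤ D * ρ := by
    have hy : y ∈ closedBall y ρ := mem_closedBall_self (dist_nonneg.trans hx)
    calc ‖(f₁ x - f₀ x) - (f₁ y - f₀ y)‖ ≤ D * ‖x - y‖ :=
          (convex_closedBall y ρ).norm_image_sub_le_of_norm_fderiv_le
            (fun z hz => (hdiff z hz).2.sub (hdiff z hz).1)
            (fun z hz => by rw [fderiv_sub (hdiff z hz).2 (hdiff z hz).1]; exact hD z hz)
            hy hx
      _ ≤ D * ρ := by
          rw [← dist_eq_norm]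
          exact mul_le_mul_of_nonneg_left hx ((norm_nonneg _).trans (hD y hy))
  have hsplit : ⟪a, f₁ x - f₀ x⟫ - ⟪b, f₁ y - f₀ y⟫ =
      ⟪a - b, f₁ x - f₀ x⟫ + ⟪b, (f₁ x - f₀ x) - (f₁ y - f₀ y)⟫ := by
    simp only [inner_sub_left, inner_sub_right]; ring
  rw [hsplit, dist_eq_norm]
  calc _ ≤ |⟪a - b, f₁ x - f₀ x⟫| + |⟪b, (f₁ x - f₀ x) - (f₁ y - f₀ y)⟫| := abs_add_le _ _
    _ ≤ ‖a - b‖ * ‖f₁ x - f₀ x‖ + ‖b‖ * ‖(f₁ x - f₀ x) - (f₁ y - f₀ y)‖ :=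
        add_le_add (abs_real_inner_le_norm _ _) (abs_real_inner_le_norm _ _)
    _ ≤ ‖a - b‖ * M + ‖b‖ * (D * ρ) := by gcongr

theorem abs_inner_sub_inner_le_cellSup {E F : Type*} [NormedAddCommGroup E] [NormedSpace ℝ E]
    [NormedAddCommGroup F] [InnerProductSpace ℝ F] {m : ℝ → E → F} {xbar : ℝ → E}
    {ρ s s' : ℝ} {x : E} (hss' : s ≤ s') (h₁ : cellSup m xbar ρ s s' ≠ ⊤)
    (h₂ : cellSup (fun t x => fderiv ℝ (m t) x) xbar ρ s s' ≠ ⊤)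
    (hdiff : ∀ z ∈ closedBall (xbar s) ρ, DifferentiableAt ℝ (m s) z ∧ DifferentiableAt ℝ (m s') z)
    (hx : dist x (xbar s) ≤ ρ) (a b : F) :
    |⟪a, m s' x - m s x⟫ - ⟪b, m s' (xbar s) - m s (xbar s)⟫| ≤
      dist a b * (cellSup m xbar ρ s s').toReal +
        ‖b‖ * ((cellSup (fun t x => fderiv ℝ (m t) x) xbar ρ s s').toReal * ρ) := by
  have hs : s ∈ Icc s s' := left_mem_Icc.2 hss'
  refine abs_inner_sub_inner_increment_le hdiff (fun z hz => ?_) ?_ hx a b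
  · rw [← dist_eq_norm, dist_edist]
    exact ENNReal.toReal_mono h₂ (edist_le_cellSup hs hz)
  · rw [← dist_eq_norm, dist_edist]
    exact ENNReal.toReal_mono h₁ (edist_le_cellSup hs hx)

section Refinement

variable {n r : ℕ} {S T : ℝ} {R P : IntervalPartition S T} {κ : ℕ → ℕ}

theorem IntervalPartition.IsRefinement.discretePairing_eq (h : R.IsRefinement P κ)
    (m : ℝ → En n → En r) (ξ : ℕ → En n) (g : ℝ → En r) :
    discretePairing m P ξ g = ∑ i ∈ Finset.range P.N, ∑ k ∈ Finset.Ico (κ i) (κ (i + 1)),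
      ⟪g (P.pts i), m (R.pts (k + 1)) (ξ i) - m (R.pts k) (ξ i)⟫ := by
  rw [discretePairing_eq_sum_inner]
  refine Finset.sum_congr rfl fun i hi => ?_
  replace hi := Finset.mem_range.1 hi
  rw [← inner_sum, Finset.sum_Ico_sub (fun k => m (R.pts k) (ξ i))
    (h.strictMonoOn hi.le hi (Nat.lt_succ_self i)).le, h.pts_comp i hi.le, h.pts_comp (i + 1) hi]

theorem abs_discretePairing_sub_le_of_isRefinement {m : ℝ → En n → En r} {xbar : ℝ → En n}
    (href : R.IsRefinement P κ) {ξ : ℕ → En n} {g : ℝ → En r} {G θ ρ : ℝ}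
    (h₁ : fSum m xbar ρ R ≠ ⊤) (h₂ : fSum (fun t x => fderiv ℝ (m t) x) xbar ρ R ≠ ⊤)
    (hdiff : ∀ k < R.N, ∀ z ∈ closedBall (xbar (R.pts k)) ρ,
      DifferentiableAt ℝ (m (R.pts k)) z ∧ DifferentiableAt ℝ (m (R.pts (k + 1))) z)
    (hG : ∀ k < R.N, ‖g (R.pts k)‖ ≤ G)
    (hg : ∀ i < P.N, ∀ s ∈ Icc (P.pts i) (P.pts (i + 1)), dist (g (P.pts i)) (g s) ≤ θ)
    (hξ : ∀ i < P.N, ∀ s ∈ Icc (P.pts i) (P.pts (i + 1)), dist (ξ i) (xbar s) ≤ ρ) :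
    |discretePairing m P ξ g - discretePairing m R (fun k => xbar (R.pts k)) g| ≤
      θ * (fSum m xbar ρ R).toReal +
        G * ρ * (fSum (fun t x => fderiv ℝ (m t) x) xbar ρ R).toReal := by
  set M := fun k => (cellSup m xbar ρ (R.pts k) (R.pts (k + 1))).toReal
  set D := fun k =>
    (cellSup (fun t x => fderiv ℝ (m t) x) xbar ρ (R.pts k) (R.pts (k + 1))).toReal
  have hcell : ∀ i < P.N, ∀ k ∈ Finset.Ico (κ i) (κ (i + 1)),
      |⟪g (P.pts i), m (R.pts (k + 1)) (ξ i) - m (R.pts k) (ξ i)⟫ -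
        ⟪g (R.pts k), m (R.pts (k + 1)) (xbar (R.pts k)) - m (R.pts k) (xbar (R.pts k))⟫| ≤
        θ * M k + G * ρ * D k := by
    intro i hi k hk
    have hkR : k < R.N := href.lt_N_of_mem_Ico hi hk
    have hsk : R.pts k ∈ Icc (P.pts i) (P.pts (i + 1)) :=
      href.Icc_subset hi hk (left_mem_Icc.2 (R.mono k hkR).le)
    calc _ ≤ dist (g (P.pts i)) (g (R.pts k)) * M k + ‖g (R.pts k)‖ * (D k * ρ) :=
          abs_inner_sub_inner_le_cellSup (R.mono k hkR).le (cellSup_ne_top h₁ hkR)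
            (cellSup_ne_top h₂ hkR) (hdiff k hkR) (hξ i hi _ hsk) _ _
      _ ≤ θ * M k + G * (D k * ρ) := by
          gcongr
          · exact hg i hi _ hsk
          · exact mul_nonneg ENNReal.toReal_nonneg (dist_nonneg.trans (hξ i hi _ hsk))
          · exact hG k hkR
      _ = θ * M k + G * ρ * D k := by ring
  calc _ = |∑ i ∈ Finset.range P.N, ∑ k ∈ Finset.Ico (κ i) (κ (i + 1)),
        (⟪g (P.pts i), m (R.pts (k + 1)) (ξ i) - m (R.pts k) (ξ i)⟫ -
          ⟪g (R.pts k), m (R.pts (k + 1)) (xbar (R.pts k)) - m (R.pts k) (xbar (R.pts k))⟫)| := by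
        simp only [Finset.sum_sub_distrib]
        rw [href.discretePairing_eq, discretePairing_eq_sum_inner, href.sum_Ico_blocks]
    _ ≤ ∑ i ∈ Finset.range P.N, ∑ k ∈ Finset.Ico (κ i) (κ (i + 1)), (θ * M k + G * ρ * D k) :=
        (Finset.abs_sum_le_sum_abs _ _).trans <| Finset.sum_le_sum fun i hi =>
          (Finset.abs_sum_le_sum_abs _ _).trans <| Finset.sum_le_sum <|
            hcell i (Finset.mem_range.1 hi)
    _ = _ := by
        rw [href.sum_Ico_blocks, Finset.sum_add_distrib, ← Finset.mul_sum, ← Finset.mul_sum,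
          sum_toReal_cellSup h₁, sum_toReal_cellSup h₂]

end Refinement

theorem exists_diamLE_forall_dist_le {β : Type*} [PseudoMetricSpace β] {S T : ℝ} {f : ℝ → β}
    (hf : ContinuousOn f (Icc S T)) {η : ℝ} (hη : 0 < η) :
    ∃ ε > 0, ∀ P : IntervalPartition S T, P.diamLE ε → ∀ i < P.N,
      ∀ s ∈ Icc (P.pts i) (P.pts (i + 1)), ∀ t ∈ Icc (P.pts i) (P.pts (i + 1)),
        dist (f s) (f t) ≤ η := by
  obtain ⟨ε, hε, hfε⟩ := Metric.uniformContinuousOn_iff_le.1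
    (isCompact_Icc.uniformContinuousOn_of_continuous hf) η hη
  exact ⟨ε, hε, fun P hP i hi s hs t ht =>
    hfε s (P.Icc_pts_subset hi hs) t (P.Icc_pts_subset hi ht) (hP.dist_le hi hs ht)⟩

theorem eventually_nhdsGT_mul_lt (c : ℝ) {b : ℝ} (hb : 0 < b) : ∀ᶠ η in 𝓝[>] (0 : ℝ), c * η < b :=
  (((continuous_const_mul c).tendsto' 0 0 (mul_zero c)).eventually_lt_const hb).filter_mono
    nhdsWithin_le_nhds

section Hypotheses

variable {n r : ℕ} {m : ℝ → En n → En r} {xbar : ℝ → En n} {S T δ' : ℝ}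

theorem HypBV1.differentiableAt (h : HypBV1 m xbar S T δ') {t : ℝ} (ht : t ∈ Icc S T)
    {x : En n} (hx : dist x (xbar t) < δ') : DifferentiableAt ℝ (m t) x :=
  ((h.2.2 t ht).contDiffAt (isOpen_ball.mem_nhds hx)).differentiableAt one_ne_zero

theorem HypBV1.differentiableAt_of_mem_cell (h : HypBV1 m xbar S T δ')
    {R : IntervalPartition S T} {k : ℕ} (hk : k < R.N) {ρ η : ℝ}
    (hosc : dist (xbar (R.pts k)) (xbar (R.pts (k + 1))) ≤ η) (hρη : ρ + η < δ') {z : En n}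
    (hz : z ∈ closedBall (xbar (R.pts k)) ρ) :
    DifferentiableAt ℝ (m (R.pts k)) z ∧ DifferentiableAt ℝ (m (R.pts (k + 1))) z := by
  rw [mem_closedBall] at hz
  have hη : 0 ≤ η := dist_nonneg.trans hosc
  refine ⟨h.differentiableAt (R.pts_mem_Icc hk.le) (by linarith),
    h.differentiableAt (R.pts_mem_Icc hk) ?_⟩
  linarith [dist_triangle z (xbar (R.pts k)) (xbar (R.pts (k + 1)))]

theorem exists_abs_discretePairing_sub_le (hBV1 : HypBV1 m xbar S T δ')
    (hBV2 : HypBV2 m xbar S T) {g : ℝ → En r} (hg : ContinuousOn g (Icc S T)) {θ : ℝ}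
    (hθ : 0 < θ) :
    ∃ ε > 0, ∃ ρ > 0, ∀ P R : IntervalPartition S T, ∀ κ, R.IsRefinement P κ → P.diamLE ε →
      ∀ ξ : ℕ → En n,
        (∀ i < P.N, ∃ t ∈ Icc (P.pts i) (P.pts (i + 1)), ξ i ∈ closedBall (xbar t) ρ) →
        |discretePairing m P ξ g - discretePairing m R (fun k => xbar (R.pts k)) g| ≤ θ := by
  obtain ⟨δ₁, hδ₁, ε₁, hε₁, hC₁⟩ := hBV2.1.exists_fEtaEps_lt_top
  obtain ⟨δ₂, hδ₂, ε₂, hε₂, hC₂⟩ := hBV2.2.exists_fEtaEps_lt_top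
  set C₁ := (fEtaEps m xbar δ₁ ε₁ S T).toReal
  set C₂ := (fEtaEps (fun t x => fderiv ℝ (m t) x) xbar δ₂ ε₂ S T).toReal
  obtain ⟨G, hG₀, hG⟩ := (isCompact_Icc.image_of_continuousOn hg).isBounded.exists_pos_norm_le
  obtain ⟨η, ⟨⟨⟨hηθ, hηδ₁⟩, hηδ₂⟩, hηδ'⟩, hη⟩ :=
    ((((eventually_nhdsGT_mul_lt (C₁ + 2 * G * C₂) hθ).and (eventually_nhdsGT_mul_lt 2 hδ₁)).and
      (eventually_nhdsGT_mul_lt 2 hδ₂)).and (eventually_nhdsGT_mul_lt 3 hBV1.2.1)).and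
      self_mem_nhdsWithin |>.exists
  obtain ⟨εg, hεg, hgε⟩ := exists_diamLE_forall_dist_le hg hη
  obtain ⟨εx, hεx, hxε⟩ := exists_diamLE_forall_dist_le hBV1.1 hη
  set ε := min (min ε₁ ε₂) (min εg εx)
  refine ⟨ε, by positivity, η, hη, fun P R κ href hP ξ hξ => ?_⟩
  have hR := href.diamLE hP
  have hfSum₁ : fSum m xbar (2 * η) R ≤ fEtaEps m xbar δ₁ ε₁ S T :=
    fSum_le_fEtaEps hηδ₁.le (hR.mono (by simp [ε]))
  have hfSum₂ : fSum (fun t x => fderiv ℝ (m t) x) xbar (2 * η) R ≤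
      fEtaEps (fun t x => fderiv ℝ (m t) x) xbar δ₂ ε₂ S T :=
    fSum_le_fEtaEps hηδ₂.le (hR.mono (by simp [ε]))
  have hdiff k (hk : k < R.N) z (hz : z ∈ closedBall (xbar (R.pts k)) (2 * η)) :=
    hBV1.differentiableAt_of_mem_cell hk (hxε R (hR.mono (by simp [ε])) k hk _
      (left_mem_Icc.2 (R.mono k hk).le) _ (right_mem_Icc.2 (R.mono k hk).le)) (by linarith) hz
  have hξ' : ∀ i < P.N, ∀ s ∈ Icc (P.pts i) (P.pts (i + 1)), dist (ξ i) (xbar s) ≤ 2 * η := by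
    intro i hi s hs
    obtain ⟨τ, hτ, hξτ⟩ := hξ i hi
    linarith [dist_triangle (ξ i) (xbar τ) (xbar s), mem_closedBall.1 hξτ,
      hxε P (hP.mono (by simp [ε])) i hi τ hτ s hs]
  calc _ ≤ η * (fSum m xbar (2 * η) R).toReal +
        G * (2 * η) * (fSum (fun t x => fderiv ℝ (m t) x) xbar (2 * η) R).toReal :=
        abs_discretePairing_sub_le_of_isRefinement href (ne_top_of_le_ne_top hC₁.ne hfSum₁)
          (ne_top_of_le_ne_top hC₂.ne hfSum₂) hdiff
          (fun k hk => hG _ (mem_image_of_mem g (R.pts_mem_Icc hk.le)))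
          (fun i hi => hgε P (hP.mono (by simp [ε])) i hi _ (left_mem_Icc.2 (P.mono i hi).le))
          hξ'
    _ ≤ η * C₁ + G * (2 * η) * C₂ := by
        gcongr
        exacts [ENNReal.toReal_mono hC₁.ne hfSum₁, ENNReal.toReal_mono hC₂.ne hfSum₂]
    _ = (C₁ + 2 * G * C₂) * η := by ring
    _ ≤ θ := hηθ.le

end Hypotheses

theorem statement13_general {n r : ℕ} (m : ℝ → En n → En r) (xbar : ℝ → En n)
    (S T : ℝ) (δ' : ℝ)
    (hBV1 : HypBV1 m xbar S T δ') (hBV2 : HypBV2 m xbar S T)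
    (P P' : ℕ → IntervalPartition S T)
    (hdiam : ∀ ε : ℝ, 0 < ε → ∃ J : ℕ, ∀ j ≥ J, (P j).diamLE ε)
    (hdiam' : ∀ ε : ℝ, 0 < ε → ∃ J : ℕ, ∀ j ≥ J, (P' j).diamLE ε)
    (ρ ρ' : ℕ → ℝ)
    (hρ : Tendsto ρ atTop (𝓝 0)) (hρ' : Tendsto ρ' atTop (𝓝 0))
    (ξ ξ' : ℕ → ℕ → En n)
    (hξ : ∀ j i, i < (P j).N →
      ∃ t ∈ Set.Icc ((P j).pts i) ((P j).pts (i + 1)),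
        ξ j i ∈ Metric.closedBall (xbar t) (ρ j))
    (hξ' : ∀ j i, i < (P' j).N →
      ∃ t ∈ Set.Icc ((P' j).pts i) ((P' j).pts (i + 1)),
        ξ' j i ∈ Metric.closedBall (xbar t) (ρ' j)) :
    ∀ g : ℝ → En r, Continuous g →
      ∀ L L' : ℝ,
        Tendsto (fun j => discretePairing m (P j) (ξ j) g) atTop (𝓝 L) →
        Tendsto (fun j => discretePairing m (P' j) (ξ' j) g) atTop (𝓝 L') →
        L = L' := by
  intro g hg L L' hL hL'
  refine eq_of_forall_dist_le fun θ hθ => le_of_tendsto (hL.dist hL') ?_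
  obtain ⟨ε, hε, ρ₀, hρ₀, happrox⟩ :=
    exists_abs_discretePairing_sub_le hBV1 hBV2 hg.continuousOn (half_pos hθ)
  obtain ⟨J, hJ⟩ := hdiam ε hε
  obtain ⟨J', hJ'⟩ := hdiam' ε hε
  filter_upwards [eventually_ge_atTop J, eventually_ge_atTop J', hρ.eventually_le_const hρ₀,
    hρ'.eventually_le_const hρ₀] with j hj hj' hρj hρ'j
  obtain ⟨R, κ, κ', hκ, hκ'⟩ := (P j).exists_common_refinement (P' j)
  let pairingR := discretePairing m R (fun k => xbar (R.pts k)) g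
  calc _ ≤ dist (discretePairing m (P j) (ξ j) g) pairingR +
        dist (discretePairing m (P' j) (ξ' j) g) pairingR :=
        dist_triangle_right _ _ _
    _ ≤ θ / 2 + θ / 2 := by
        rw [Real.dist_eq, Real.dist_eq]
        refine add_le_add (happrox _ _ _ hκ (hJ j hj) _ fun i hi => ?_)
          (happrox _ _ _ hκ' (hJ' j hj') _ fun i hi => ?_)
        · exact (hξ j i hi).imp fun t => And.imp_right (closedBall_subset_closedBall hρj ·)
        · exact (hξ' j i hi).imp fun t => And.imp_right (closedBall_subset_closedBall hρ'j ·)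
    _ = θ := add_halves θ

/-- Under (BV1) and (BV2), the weak* limit of the discrete measures
`μʲ = Σᵢ [m(tʲᵢ₊₁,ξʲᵢ) − m(tʲᵢ,ξʲᵢ)] δ_{tʲᵢ}` does not depend on the admissible choice
of partitions (diameters tending to `0`), of `ρʲ ↓ 0`, or of the vectors `ξʲᵢ`: for
every continuous `g`, the limits of the pairings along any two admissible choices
coincide. -/
theorem statement13 {n r : ℕ} (m : ℝ → En n → En r) (xbar : ℝ → En n)
    (S T : ℝ) (hST : S < T) (δ' : ℝ)
    (hBV1 : HypBV1 m xbar S T δ') (hBV2 : HypBV2 m xbar S T)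
    (P P' : ℕ → IntervalPartition S T)
    (hdiam : ∀ ε : ℝ, 0 < ε → ∃ J : ℕ, ∀ j ≥ J, (P j).diamLE ε)
    (hdiam' : ∀ ε : ℝ, 0 < ε → ∃ J : ℕ, ∀ j ≥ J, (P' j).diamLE ε)
    (ρ ρ' : ℕ → ℝ) (hρpos : ∀ j, 0 < ρ j) (hρ'pos : ∀ j, 0 < ρ' j)
    (hρanti : Antitone ρ) (hρ'anti : Antitone ρ')
    (hρ : Tendsto ρ atTop (𝓝 0)) (hρ' : Tendsto ρ' atTop (𝓝 0))
    (ξ ξ' : ℕ → ℕ → En n)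
    (hξ : ∀ j i, i < (P j).N →
      ∃ t ∈ Set.Icc ((P j).pts i) ((P j).pts (i + 1)),
        ξ j i ∈ Metric.closedBall (xbar t) (ρ j))
    (hξ' : ∀ j i, i < (P' j).N →
      ∃ t ∈ Set.Icc ((P' j).pts i) ((P' j).pts (i + 1)),
        ξ' j i ∈ Metric.closedBall (xbar t) (ρ' j)) :
    ∀ g : ℝ → En r, Continuous g →
      ∀ L L' : ℝ,
        Tendsto (fun j => discretePairing m (P j) (ξ j) g) atTop (𝓝 L) →
        Tendsto (fun j => discretePairing m (P' j) (ξ' j) g) atTop (𝓝 L') →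
        L = L' :=
  statement13_general m xbar S T δ' hBV1 hBV2 P P' hdiam hdiam' ρ ρ' hρ hρ' ξ ξ' hξ hξ'
end
end
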